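/- Let Ω be a nonempty finite type, let E = ⟨𝓔, mod⟩ be an epistemic space over Ω, and let ÷ be a belief change operator for E. Then ÷ is an AGM contraction operator for E if and only if there exists a faithful assignment for E that is contraction-compatible with ÷. -/

import Mathlib

/-!
For a contraction operator, `ω ≤_Ψ ω'` is read off as whether `ω` survives contracting `Ψ`
by `¬ω ∧ ¬ω'`. Success (C3) makes this relation total and, with conjunctive inclusion (C7),
transitive; vacuity (C2) makes it faithful; and conjunctive overlap (C6) with recovery (C4)
shows that a model outside `A` survives contracting by `A` exactly when it is `≤_Ψ`-minimal
outside `A`. Conversely, for `mod Ψ ∪ min(Aᶜ, ≤_Ψ)` each postulate is a property of minima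
of a total preorder; only (C3) needs `Ω` finite, so that nonempty sets have minima.
-/

open Set

/-- `minSet r S` is the set of `r`-minimal elements of `S`:
`min(S, r) = {ω ∈ S : r ω ω' for all ω' ∈ S}`. -/
def minSet {Ω : Type*} (r : Ω → Ω → Prop) (S : Set Ω) : Set Ω :=
  {ω ∈ S | ∀ ω' ∈ S, r ω ω'}

/-- A linear order as a relation: total, antisymmetric and transitive. -/
def IsLinRel {Ω : Type*} (r : Ω → Ω → Prop) : Prop :=
  (∀ a b, r a b ∨ r b a) ∧ (∀ a b, r a b → r b a → a = b) ∧
    (∀ a b c, r a b → r b c → r a c)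

/-- AGM contraction operator for the epistemic space `⟨E, md⟩` (postulates C1–C7,
formulated on model sets). -/
def IsContraction {Ω E : Type*} (md : E → Set Ω) (c : E → Set Ω → E) : Prop :=
  ∀ (Ψ : E) (A B : Set Ω),
    md Ψ ⊆ md (c Ψ A) ∧
    (¬ md Ψ ⊆ A → md (c Ψ A) ⊆ md Ψ) ∧
    (A ≠ Set.univ → ¬ md (c Ψ A) ⊆ A) ∧
    md (c Ψ A) ∩ A ⊆ md Ψ ∧
    md (c Ψ (A ∩ B)) ⊆ md (c Ψ A) ∪ md (c Ψ B) ∧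
    (¬ md (c Ψ (A ∩ B)) ⊆ B → md (c Ψ B) ⊆ md (c Ψ (A ∩ B)))

/-- AGM revision operator for the epistemic space `⟨E, md⟩` (postulates R1–R6,
formulated on model sets). -/
def IsRevision {Ω E : Type*} (md : E → Set Ω) (s : E → Set Ω → E) : Prop :=
  ∀ (Ψ : E) (A B : Set Ω),
    md (s Ψ A) ⊆ A ∧
    (md Ψ ∩ A ≠ ∅ → md (s Ψ A) = md Ψ ∩ A) ∧
    (A ≠ ∅ → md (s Ψ A) ≠ ∅) ∧
    md (s Ψ A) ∩ B ⊆ md (s Ψ (A ∩ B)) ∧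
    (md (s Ψ A) ∩ B ≠ ∅ → md (s Ψ (A ∩ B)) ⊆ md (s Ψ A) ∩ B)

/-- Postulate (ZC). -/
def ZC {Ω E : Type*} (md : E → Set Ω) : Prop :=
  ∀ (Ψ : E) (M : Set Ω), md Ψ ⊆ M → ∃ Ψ' : E, md Ψ' = M

/-- Postulate (ZR1). -/
def ZR1 {Ω E : Type*} (md : E → Set Ω) : Prop :=
  ∀ ω : Ω, ∃ Ψ : E, md Ψ = {ω}

/-- Postulate (ZR2). -/
def ZR2 {Ω E : Type*} (md : E → Set Ω) : Prop :=
  ∀ (Ψ : E) (M : Set Ω), M ⊆ md Ψ → ∃ Ψ' : E, md Ψ' = M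

/-- Postulate (Unbiased). -/
def Unbiased {Ω E : Type*} (md : E → Set Ω) : Prop :=
  ∀ M : Set Ω, ∃ Ψ : E, md Ψ = M

/-- Maxichoice contraction operator. -/
def IsMaxichoiceContraction {Ω E : Type*} (md : E → Set Ω) (c : E → Set Ω → E) : Prop :=
  IsContraction md c ∧
    ∀ Ψ : E, ∃ r : Ω → Ω → Prop, IsLinRel r ∧ ∀ A : Set Ω,
      (¬ md Ψ ⊆ A → md (c Ψ A) = md Ψ) ∧
      (md Ψ ⊆ A → md (c Ψ A) = md Ψ ∪ minSet r Aᶜ)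

/-- Linear contraction operator: a maxichoice contraction operator based on one
single linear order for all epistemic states. -/
def IsLinearContraction {Ω E : Type*} (md : E → Set Ω) (c : E → Set Ω → E) : Prop :=
  IsContraction md c ∧
    ∃ r : Ω → Ω → Prop, IsLinRel r ∧ ∀ (Ψ : E) (A : Set Ω),
      (¬ md Ψ ⊆ A → md (c Ψ A) = md Ψ) ∧
      (md Ψ ⊆ A → md (c Ψ A) = md Ψ ∪ minSet r Aᶜ)

/-- Full meet contraction operator. -/
def IsFullMeetContraction {Ω E : Type*} (md : E → Set Ω) (c : E → Set Ω → E) : Prop :=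
  IsContraction md c ∧
    ∀ (Ψ : E) (A : Set Ω),
      (¬ md Ψ ⊆ A → md (c Ψ A) = md Ψ) ∧
      (md Ψ ⊆ A → md (c Ψ A) = md Ψ ∪ Aᶜ)

/-- Maxichoice revision operator. -/
def IsMaxichoiceRevision {Ω E : Type*} (md : E → Set Ω) (s : E → Set Ω → E) : Prop :=
  IsRevision md s ∧
    ∀ Ψ : E, ∃ r : Ω → Ω → Prop, IsLinRel r ∧ ∀ A : Set Ω,
      (md Ψ ∩ A ≠ ∅ → md (s Ψ A) = md Ψ ∩ A) ∧
      (md Ψ ∩ A = ∅ → md (s Ψ A) = minSet r A)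

/-- Linear revision operator: a maxichoice revision operator based on one single
linear order for all epistemic states. -/
def IsLinearRevision {Ω E : Type*} (md : E → Set Ω) (s : E → Set Ω → E) : Prop :=
  IsRevision md s ∧
    ∃ r : Ω → Ω → Prop, IsLinRel r ∧ ∀ (Ψ : E) (A : Set Ω),
      (md Ψ ∩ A ≠ ∅ → md (s Ψ A) = md Ψ ∩ A) ∧
      (md Ψ ∩ A = ∅ → md (s Ψ A) = minSet r A)

/-- Full meet revision operator. -/
def IsFullMeetRevision {Ω E : Type*} (md : E → Set Ω) (s : E → Set Ω → E) : Prop :=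
  IsRevision md s ∧
    ∀ (Ψ : E) (A : Set Ω),
      (md Ψ ∩ A ≠ ∅ → md (s Ψ A) = md Ψ ∩ A) ∧
      (md Ψ ∩ A = ∅ → md (s Ψ A) = A)


/-- A faithful assignment for `⟨E, md⟩`: each state `Ψ` is mapped to a total
preorder `≤_Ψ` on `Ω` such that `mod Ψ ≠ ∅` implies `mod Ψ = min(Ω, ≤_Ψ)`. -/
def IsFaithful {Ω E : Type*} (md : E → Set Ω) (f : E → Ω → Ω → Prop) : Prop :=
  ∀ Ψ : E,
    (∀ a b, f Ψ a b ∨ f Ψ b a) ∧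
    (∀ a b c, f Ψ a b → f Ψ b c → f Ψ a c) ∧
    (md Ψ ≠ ∅ → md Ψ = minSet (f Ψ) Set.univ)

/-- A faithful assignment is contraction-compatible with `c` if
`mod (c Ψ A) = mod Ψ ∪ min(Ω \ A, ≤_Ψ)` for all `Ψ` and `A`. -/
def ContractionCompatible {Ω E : Type*} (md : E → Set Ω) (c : E → Set Ω → E)
    (f : E → Ω → Ω → Prop) : Prop :=
  ∀ (Ψ : E) (A : Set Ω), md (c Ψ A) = md Ψ ∪ minSet (f Ψ) Aᶜ

section MinSet

variable {Ω : Type*} {r : Ω → Ω → Prop} {S T : Set Ω}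

lemma minSet_union_subset : minSet r (S ∪ T) ⊆ minSet r S ∪ minSet r T := by
  rintro x ⟨hS | hT, hmin⟩
  · exact Or.inl ⟨hS, fun y hy => hmin y (Or.inl hy)⟩
  · exact Or.inr ⟨hT, fun y hy => hmin y (Or.inr hy)⟩

lemma minSet_subset_minSet_of_mem (htr : ∀ a b c, r a b → r b c → r a c) (hST : S ⊆ T)
    {w : Ω} (hwS : w ∈ S) (hwT : w ∈ minSet r T) : minSet r S ⊆ minSet r T :=
  fun x hx => ⟨hST hx.1, fun y hy => htr x w y (hx.2 w hwS) (hwT.2 y hy)⟩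

lemma minSet_nonempty [Finite Ω] (htot : ∀ a b, r a b ∨ r b a)
    (htr : ∀ a b c, r a b → r b c → r a c) (hS : S.Nonempty) : (minSet r S).Nonempty := by
  -- the strict part `¬ r b a` of a total preorder is a strict order, hence well founded
  have : IsStrictOrder Ω (fun a b => ¬ r b a) :=
    { irrefl := fun a h => h ((htot a a).elim id id)
      trans := fun a b c hab hbc hca => hab (htr b c a ((htot b c).resolve_right hbc) hca) }
  obtain ⟨x, hxS, hmin⟩ :=
    (Finite.wellFounded_of_trans_of_irrefl fun a b : Ω => ¬ r b a).has_min S hS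
  exact ⟨x, hxS, fun y hy => not_not.mp (hmin y hy)⟩

end MinSet

namespace IsContraction

variable {Ω E : Type*} {md : E → Set Ω} {c : E → Set Ω → E} (hc : IsContraction md c)
  (Ψ : E) {A B : Set Ω}
include hc

lemma inclusion : md Ψ ⊆ md (c Ψ A) := (hc Ψ A A).1

lemma vacuity (h : ¬ md Ψ ⊆ A) : md (c Ψ A) ⊆ md Ψ := (hc Ψ A A).2.1 h

lemma success (h : A ≠ univ) : ¬ md (c Ψ A) ⊆ A := (hc Ψ A A).2.2.1 h

lemma recovery : md (c Ψ A) ∩ A ⊆ md Ψ := (hc Ψ A A).2.2.2.1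

lemma conjunctive_overlap : md (c Ψ (A ∩ B)) ⊆ md (c Ψ A) ∪ md (c Ψ B) :=
  (hc Ψ A B).2.2.2.2.1

lemma conjunctive_inclusion (h : ¬ md (c Ψ (A ∩ B)) ⊆ B) :
    md (c Ψ B) ⊆ md (c Ψ (A ∩ B)) :=
  (hc Ψ A B).2.2.2.2.2 h

lemma contract_diff_subset_of_subset (hAB : A ⊆ B) : md (c Ψ A) \ B ⊆ md (c Ψ B) := by
  rintro x ⟨hxA, hxB⟩
  have hsplit : (A ∪ Bᶜ) ∩ B = A := by
    rw [union_inter_distrib_right, compl_inter_self, union_empty, inter_eq_left.mpr hAB]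
  rcases hc.conjunctive_overlap Ψ (hsplit.symm ▸ hxA) with hx | hx
  · exact hc.inclusion Ψ (hc.recovery Ψ ⟨hx, Or.inr hxB⟩)
  · exact hx

lemma contract_subset_of_subset (hAB : A ⊆ B) (h : ¬ md (c Ψ A) ⊆ B) : md (c Ψ B) ⊆ md (c Ψ A) := by
  rw [← inter_eq_left.mpr hAB] at h ⊢
  exact hc.conjunctive_inclusion Ψ h

end IsContraction

/-- Contracting by `{a, b}ᶜ` (the belief `¬a ∧ ¬b`) brings back `a` or `b`; `a ≤_Ψ b`
says that `a` is brought back. -/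
def contractionPreorder {Ω E : Type*} (md : E → Set Ω) (c : E → Set Ω → E) (Ψ : E)
    (a b : Ω) : Prop :=
  a ∈ md (c Ψ {a, b}ᶜ)

namespace IsContraction

variable {Ω E : Type*} {md : E → Set Ω} {c : E → Set Ω → E} (hc : IsContraction md c)
  (Ψ : E)
include hc

lemma exists_mem_contract_compl {S : Set Ω} (hS : S.Nonempty) :
    ∃ w ∈ S, w ∈ md (c Ψ Sᶜ) := by
  obtain ⟨w, hw, hwS⟩ := not_subset.mp (hc.success Ψ (compl_ne_univ.mpr hS))
  exact ⟨w, not_notMem.mp hwS, hw⟩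

lemma contractionPreorder_total (a b : Ω) :
    contractionPreorder md c Ψ a b ∨ contractionPreorder md c Ψ b a := by
  obtain ⟨w, hw, hwc⟩ := hc.exists_mem_contract_compl Ψ (insert_nonempty a {b})
  rcases hw with rfl | rfl
  · exact Or.inl hwc
  · exact Or.inr (by rwa [contractionPreorder, pair_comm])

lemma contractionPreorder_trans (x y z : Ω) (hxy : contractionPreorder md c Ψ x y)
    (hyz : contractionPreorder md c Ψ y z) : contractionPreorder md c Ψ x z := by
  set T : Set Ω := {x, y, z}ᶜ
  have hpair {a b : Ω} (ha : a ∈ ({x, y, z} : Set Ω)) (hb : b ∈ ({x, y, z} : Set Ω))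
      (hbT : b ∈ md (c Ψ T)) : md (c Ψ {a, b}ᶜ) ⊆ md (c Ψ T) := by
    exact hc.contract_subset_of_subset Ψ (compl_subset_compl.mpr (pair_subset ha hb))
      fun h => h hbT (by simp)
  have hxT_of_hyT (hyT : y ∈ md (c Ψ T)) : x ∈ md (c Ψ T) := hpair (by simp) (by simp) hyT hxy
  have hxT : x ∈ md (c Ψ T) := by
    obtain ⟨w, hw, hwT⟩ := hc.exists_mem_contract_compl Ψ (insert_nonempty x {y, z})
    rcases hw with rfl | rfl | rfl
    · exact hwT
    · exact hxT_of_hyT hwT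
    · exact hxT_of_hyT (hpair (by simp) (by simp) hwT hyz)
  exact hc.contract_diff_subset_of_subset Ψ
    (compl_subset_compl.mpr (pair_subset (by simp) (by simp))) ⟨hxT, by simp⟩

lemma md_eq_minSet_contractionPreorder (hne : md Ψ ≠ ∅) :
    md Ψ = minSet (contractionPreorder md c Ψ) univ := by
  obtain ⟨ω₀, hω₀⟩ := nonempty_iff_ne_empty.mpr hne
  ext ω
  refine ⟨fun hω => ⟨mem_univ ω, fun ω' _ => hc.inclusion Ψ hω⟩, fun ⟨_, hmin⟩ => ?_⟩
  exact hc.vacuity Ψ (A := {ω, ω₀}ᶜ) (fun h => h hω₀ (by simp)) (hmin ω₀ (mem_univ ω₀))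

lemma md_contract_eq (A : Set Ω) :
    md (c Ψ A) = md Ψ ∪ minSet (contractionPreorder md c Ψ) Aᶜ := by
  ext ω
  constructor
  · intro hω
    by_cases hωA : ω ∈ A
    · exact Or.inl (hc.recovery Ψ ⟨hω, hωA⟩)
    · exact Or.inr ⟨hωA, fun y hy => hc.contract_diff_subset_of_subset Ψ
        (subset_compl_comm.mp (pair_subset hωA hy)) ⟨hω, by simp⟩⟩
  · rintro (hω | ⟨hωA, hmin⟩)
    · exact hc.inclusion Ψ hω
    · -- a survivor `w ∉ A` of contracting by `A` pulls in everything `≤_Ψ`-below it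
      obtain ⟨w, hwA, hw⟩ := hc.exists_mem_contract_compl Ψ ⟨ω, hωA⟩
      rw [compl_compl] at hw
      exact hc.contract_subset_of_subset Ψ (subset_compl_comm.mp (pair_subset hωA hwA))
        (fun h => h hw (by simp)) (hmin w hwA)

lemma isFaithful : IsFaithful md (contractionPreorder md c) := fun Ψ =>
  ⟨hc.contractionPreorder_total Ψ, hc.contractionPreorder_trans Ψ,
    hc.md_eq_minSet_contractionPreorder Ψ⟩

end IsContraction

lemma isContraction_of_contractionCompatible {Ω E : Type*} [Finite Ω] {md : E → Set Ω}
    {c : E → Set Ω → E} {f : E → Ω → Ω → Prop} (hf : IsFaithful md f)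
    (hcomp : ContractionCompatible md c f) : IsContraction md c := by
  intro Ψ A B
  obtain ⟨htot, htr, hfaith⟩ := hf Ψ
  have hmd_min : md Ψ ⊆ minSet (f Ψ) univ := fun w hw =>
    hfaith (nonempty_of_mem hw).ne_empty ▸ hw
  simp only [hcomp Ψ]
  refine ⟨subset_union_left, ?_, ?_, ?_, ?_, ?_⟩
  · intro hA
    obtain ⟨w, hw, hwA⟩ := not_subset.mp hA
    rw [hfaith (nonempty_of_mem hw).ne_empty]
    exact union_subset subset_rfl
      (minSet_subset_minSet_of_mem htr (subset_univ _) hwA (hmd_min hw))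
  · intro hA hsub
    obtain ⟨x, hx⟩ := minSet_nonempty htot htr (nonempty_compl.mpr hA)
    exact hx.1 (hsub (Or.inr hx))
  · rintro x ⟨hx | hx, hxA⟩
    · exact hx
    · exact absurd hxA hx.1
  · rw [compl_inter, ← union_union_distrib_left]
    exact union_subset_union_right _ minSet_union_subset
  · intro hB
    obtain ⟨w, hw, hwB⟩ := not_subset.mp hB
    rw [compl_inter] at hw ⊢
    have hwmin : w ∈ minSet (f Ψ) (Aᶜ ∪ Bᶜ) := by
      rcases hw with hw | hw
      · exact ⟨Or.inr hwB, fun y _ => (hmd_min hw).2 y (mem_univ y)⟩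
      · exact hw
    exact union_subset_union_right _
      (minSet_subset_minSet_of_mem htr subset_union_right hwB hwmin)

theorem contraction_iff_faithful_assignment_general {Ω E : Type*} [Fintype Ω]
    (md : E → Set Ω) (c : E → Set Ω → E) :
    IsContraction md c ↔
      ∃ f : E → Ω → Ω → Prop, IsFaithful md f ∧ ContractionCompatible md c f :=
  ⟨fun hc => ⟨_, hc.isFaithful, hc.md_contract_eq⟩,
    fun ⟨_, hf, hcomp⟩ => isContraction_of_contractionCompatible hf hcomp⟩

/-- A belief change operator is an AGM contraction operator iff
it is contraction-compatible with some faithful assignment. -/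
theorem contraction_iff_faithful_assignment {Ω E : Type*} [Fintype Ω] [Nonempty Ω]
    [Nonempty E] (md : E → Set Ω) (c : E → Set Ω → E) :
    IsContraction md c ↔
      ∃ f : E → Ω → Ω → Prop, IsFaithful md f ∧ ContractionCompatible md c f :=
  contraction_iff_faithful_assignment_general md c
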